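/- Let (Θ₁, μ₁) and (Θ₂, μ₂) be probability spaces and let R : Θ₁ × Θ₂ → ℝ be square-integrable with respect to μ₁ ⊗ μ₂. Then Var^b_{θ₁}(R) − Var^b_{θ₂}(R) = Var^a_{θ₁}(R) − Var^a_{θ₂}(R); that is, the 'before' and 'after' ways of integrating out the other hyperparameter produce the same difference of importances, and hence the same importance ranking of θ₁ versus θ₂. -/

import Mathlib

/-!
Both differences are rearrangements of the law of total variance. Averaging out `θ₂` first
splits `Var R = Var^b_{θ₁}(R) + Var^a_{θ₂}(R)`: the variance of the conditional mean plus the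
mean of the conditional variance. Applied to `R ∘ Prod.swap`, the same split gives
`Var R = Var^b_{θ₂}(R) + Var^a_{θ₁}(R)`, and subtracting the two identities proves the claim.
-/

open MeasureTheory

/-- The 'before' importance of the first hyperparameter. -/
noncomputable def varB1 {Θ₁ Θ₂ : Type*} [MeasurableSpace Θ₁] [MeasurableSpace Θ₂]
    (μ₁ : Measure Θ₁) (μ₂ : Measure Θ₂) (f : Θ₁ × Θ₂ → ℝ) : ℝ :=
  ∫ θ₁, (∫ θ₂, f (θ₁, θ₂) ∂μ₂ - ∫ p, f p ∂(μ₁.prod μ₂)) ^ 2 ∂μ₁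

/-- The 'before' importance of the second hyperparameter. -/
noncomputable def varB2 {Θ₁ Θ₂ : Type*} [MeasurableSpace Θ₁] [MeasurableSpace Θ₂]
    (μ₁ : Measure Θ₁) (μ₂ : Measure Θ₂) (f : Θ₁ × Θ₂ → ℝ) : ℝ :=
  ∫ θ₂, (∫ θ₁, f (θ₁, θ₂) ∂μ₁ - ∫ p, f p ∂(μ₁.prod μ₂)) ^ 2 ∂μ₂

/-- The 'after' importance of the first hyperparameter. -/
noncomputable def varA1 {Θ₁ Θ₂ : Type*} [MeasurableSpace Θ₁] [MeasurableSpace Θ₂]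
    (μ₁ : Measure Θ₁) (μ₂ : Measure Θ₂) (f : Θ₁ × Θ₂ → ℝ) : ℝ :=
  ∫ θ₂, ∫ θ₁, (f (θ₁, θ₂) - ∫ θ₁', f (θ₁', θ₂) ∂μ₁) ^ 2 ∂μ₁ ∂μ₂

/-- The 'after' importance of the second hyperparameter. -/
noncomputable def varA2 {Θ₁ Θ₂ : Type*} [MeasurableSpace Θ₁] [MeasurableSpace Θ₂]
    (μ₁ : Measure Θ₁) (μ₂ : Measure Θ₂) (f : Θ₁ × Θ₂ → ℝ) : ℝ :=
  ∫ θ₁, ∫ θ₂, (f (θ₁, θ₂) - ∫ θ₂', f (θ₁, θ₂') ∂μ₂) ^ 2 ∂μ₂ ∂μ₁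

open ProbabilityTheory

namespace MeasureTheory

variable {α β : Type*} [MeasurableSpace α] [MeasurableSpace β] {μ : Measure α} {ν : Measure β}

lemma sq_integral_le_integral_sq [IsProbabilityMeasure μ] {a : α → ℝ} (ha : MemLp a 2 μ) :
    (∫ x, a x ∂μ) ^ 2 ≤ ∫ x, a x ^ 2 ∂μ := by
  have := variance_nonneg a μ
  rw [variance_eq_sub ha] at this
  simpa using this

lemma MemLp.ae_memLp_two_prodMk [SFinite μ] [SFinite ν] {f : α × β → ℝ}
    (hf : MemLp f 2 (μ.prod ν)) : ∀ᵐ x ∂μ, MemLp (fun y ↦ f (x, y)) 2 ν := by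
  filter_upwards [hf.integrable_sq.prod_right_ae, hf.aestronglyMeasurable.prodMk_left]
    with x hsq hmeas
  exact (memLp_two_iff_integrable_sq hmeas).2 hsq

lemma MemLp.integral_prod_left_two [SFinite μ] [IsProbabilityMeasure ν] {f : α × β → ℝ}
    (hf : MemLp f 2 (μ.prod ν)) : MemLp (fun x ↦ ∫ y, f (x, y) ∂ν) 2 μ := by
  have hmeas : AEStronglyMeasurable (fun x ↦ ∫ y, f (x, y) ∂ν) μ :=
    hf.aestronglyMeasurable.integral_prod_right'
  refine (memLp_two_iff_integrable_sq hmeas).2 <|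
    hf.integrable_sq.integral_prod_left.mono' (hmeas.pow 2) ?_
  filter_upwards [hf.ae_memLp_two_prodMk] with x hx
  simpa using sq_integral_le_integral_sq hx

end MeasureTheory

section

variable {Θ₁ Θ₂ : Type*} [MeasurableSpace Θ₁] [MeasurableSpace Θ₂]
  {μ₁ : Measure Θ₁} {μ₂ : Measure Θ₂}

theorem varB1_add_varA2 [IsProbabilityMeasure μ₁] [IsProbabilityMeasure μ₂] {f : Θ₁ × Θ₂ → ℝ}
    (hf : MemLp f 2 (μ₁.prod μ₂)) :
    varB1 μ₁ μ₂ f + varA2 μ₁ μ₂ f = Var[f; μ₁.prod μ₂] := by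
  set g : Θ₁ → ℝ := fun θ₁ ↦ ∫ θ₂, f (θ₁, θ₂) ∂μ₂
  have hg : MemLp g 2 μ₁ := hf.integral_prod_left_two
  have hg_mean : ∫ θ₁, g θ₁ ∂μ₁ = ∫ p, f p ∂(μ₁.prod μ₂) :=
    integral_integral (hf.integrable one_le_two)
  have hB : varB1 μ₁ μ₂ f = ∫ θ₁, g θ₁ ^ 2 ∂μ₁ - (∫ p, f p ∂(μ₁.prod μ₂)) ^ 2 := by
    rw [varB1, ← hg_mean, ← variance_eq_integral hg.aemeasurable, variance_eq_sub hg]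
    rfl
  have h_slice : ∀ᵐ θ₁ ∂μ₁, ∫ θ₂, (f (θ₁, θ₂) - g θ₁) ^ 2 ∂μ₂ =
      ∫ θ₂, f (θ₁, θ₂) ^ 2 ∂μ₂ - g θ₁ ^ 2 := by
    filter_upwards [hf.ae_memLp_two_prodMk] with θ₁ h
    rw [← variance_eq_integral h.aemeasurable, variance_eq_sub h]
    rfl
  have hA : varA2 μ₁ μ₂ f = ∫ p, f p ^ 2 ∂(μ₁.prod μ₂) - ∫ θ₁, g θ₁ ^ 2 ∂μ₁ := by
    rw [varA2, integral_congr_ae h_slice,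
      integral_sub hf.integrable_sq.integral_prod_left hg.integrable_sq,
      integral_integral hf.integrable_sq]
  rw [hB, hA, variance_eq_sub hf]
  simp only [Pi.pow_apply]
  ring

theorem varB1_swap [SFinite μ₁] [SFinite μ₂] (f : Θ₁ × Θ₂ → ℝ) :
    varB1 μ₂ μ₁ (fun p ↦ f p.swap) = varB2 μ₁ μ₂ f := by
  rw [varB1, varB2, integral_prod_swap]
  rfl

theorem varA2_swap (f : Θ₁ × Θ₂ → ℝ) :
    varA2 μ₂ μ₁ (fun p ↦ f p.swap) = varA1 μ₁ μ₂ f :=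
  rfl

end

theorem before_after_importance_difference_eq
    {Θ₁ Θ₂ : Type*} [MeasurableSpace Θ₁] [MeasurableSpace Θ₂]
    (μ₁ : Measure Θ₁) (μ₂ : Measure Θ₂)
    [IsProbabilityMeasure μ₁] [IsProbabilityMeasure μ₂]
    (R : Θ₁ × Θ₂ → ℝ) (hR : MemLp R 2 (μ₁.prod μ₂)) :
    varB1 μ₁ μ₂ R - varB2 μ₁ μ₂ R = varA1 μ₁ μ₂ R - varA2 μ₁ μ₂ R := by
  have h_swap := Measure.measurePreserving_swap (μ := μ₂) (ν := μ₁)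
  have h₁ := varB1_add_varA2 hR
  have h₂ := varB1_add_varA2 (hR.comp_measurePreserving h_swap)
  rw [Function.comp_def, varB1_swap, varA2_swap, h_swap.variance_fun_comp hR.aemeasurable]
    at h₂
  linarith
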